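/- Let f : [−π,π] → ℝ be continuous, even, and piecewise monotone with a unique interior maximizer θ_M ∈ (0,π) at which f'(θ_M) = 0 and f is C¹ and strictly monotone on each side of θ_M near θ_M. Consider g = f on [0,π] with normalized Lebesgue measure, and let g̃ be its monotone rearrangement on [0,1]. Then g̃ is differentiable at x = 1 with g̃'(1) = 0. -/

import Mathlib

open Real MeasureTheory

/-- Let `f` be continuous on `[−π,π]`, even, piecewise monotone, with a unique
interior maximizer `θ_M ∈ (0,π)` where `f'(θ_M) = 0`, `f` being `C¹` and
strictly monotone on each side of `θ_M` nearby.  Then the monotone rearrangement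
`g̃` of `f` on `[0,π]` (with normalized Lebesgue measure) is differentiable at
`x = 1` (from the left) with `g̃'(1) = 0`. -/
theorem stmt_18 (f : ℝ → ℝ)
    (hf : ContinuousOn f (Set.Icc (-π) π))
    (heven : ∀ θ : ℝ, f (-θ) = f θ)
    -- piecewise monotone on [0,π]:
    (hpm : ∃ (N : ℕ) (c : Fin (N + 1) → ℝ), c 0 = 0 ∧ c (Fin.last N) = π ∧
      Monotone c ∧ ∀ i : Fin N,
        StrictMonoOn f (Set.Icc (c i.castSucc) (c i.succ)) ∨
        StrictAntiOn f (Set.Icc (c i.castSucc) (c i.succ)))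
    (θM : ℝ) (hθM : θM ∈ Set.Ioo 0 π)
    (hmax : ∀ θ ∈ Set.Icc 0 π, θ ≠ θM → f θ < f θM)
    (hderiv : deriv f θM = 0)
    (hside : ∃ δ > 0, StrictMonoOn f (Set.Icc (θM - δ) θM) ∧
      StrictAntiOn f (Set.Icc θM (θM + δ)) ∧
      ContDiffOn ℝ 1 f (Set.Icc (θM - δ) (θM + δ)))
    (gt : ℝ → ℝ)
    (hgt : ∀ x : ℝ, gt x = sInf {t : ℝ |
      x ≤ (1 / π) * (volume {θ : ℝ | θ ∈ Set.Icc 0 π ∧ f θ ≤ t}).toReal}) :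
    HasDerivWithinAt gt 0 (Set.Iic 1) 1 := by
  obtain ⟨θM0, θMπ⟩ := hθM
  obtain ⟨δ, hδ, hmono, hanti, hC1⟩ := hside
  have hπ : (0:ℝ) < π := Real.pi_pos
  set M := f θM with hMdef
  set m : ℝ → ℝ := fun t => (volume {θ : ℝ | θ ∈ Set.Icc 0 π ∧ f θ ≤ t}).toReal with hmdef
  have hgt' : ∀ x : ℝ, gt x = sInf {t : ℝ | x ≤ (1 / π) * m t} := hgt
  -- basic facts about m
  have hvol_fin : ∀ t, volume {θ : ℝ | θ ∈ Set.Icc 0 π ∧ f θ ≤ t} ≤ ENNReal.ofReal π := by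
    intro t
    have : {θ : ℝ | θ ∈ Set.Icc 0 π ∧ f θ ≤ t} ⊆ Set.Icc 0 π := fun θ h => h.1
    calc volume {θ : ℝ | θ ∈ Set.Icc 0 π ∧ f θ ≤ t} ≤ volume (Set.Icc 0 π) := measure_mono this
    _ = ENNReal.ofReal π := by rw [Real.volume_Icc]; norm_num
  have hmono_m : Monotone m := by
    intro t t' htt'
    apply ENNReal.toReal_mono (lt_of_le_of_lt (hvol_fin t') ENNReal.ofReal_lt_top).ne
    exact measure_mono fun θ h => ⟨h.1, h.2.trans htt'⟩
  -- key measure estimate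
  have hA : ∀ t a, 0 ≤ a → a ≤ θM → (∀ θ ∈ Set.Ioc a θM, t < f θ) →
      m t ≤ π - (θM - a) := by
    intro t a ha haM hgt2
    have hdisj : Disjoint {θ : ℝ | θ ∈ Set.Icc 0 π ∧ f θ ≤ t} (Set.Ioc a θM) := by
      rw [Set.disjoint_left]
      rintro θ ⟨_, hft⟩ hθ
      exact absurd hft (not_le.2 (hgt2 θ hθ))
    have hsub : {θ : ℝ | θ ∈ Set.Icc 0 π ∧ f θ ≤ t} ∪ Set.Ioc a θM ⊆ Set.Icc 0 π := by
      rintro θ (h1 | h2)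
      · exact h1.1
      · exact ⟨le_trans ha h2.1.le, h2.2.trans θMπ.le⟩
    have hunion := measure_union (μ := volume) hdisj measurableSet_Ioc
    have hle : volume {θ : ℝ | θ ∈ Set.Icc 0 π ∧ f θ ≤ t} + volume (Set.Ioc a θM)
        ≤ volume (Set.Icc 0 π) := hunion ▸ measure_mono hsub
    have h2 : volume {θ : ℝ | θ ∈ Set.Icc 0 π ∧ f θ ≤ t}
        ≤ volume (Set.Icc 0 π) - volume (Set.Ioc a θM) :=
      ENNReal.le_sub_of_add_le_right (by rw [Real.volume_Ioc]; exact ENNReal.ofReal_ne_top) hle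
    rw [Real.volume_Icc, Real.volume_Ioc, ← ENNReal.ofReal_sub _ (by linarith)] at h2
    exact ENNReal.toReal_le_of_le_ofReal (by linarith) (by simpa using h2)
  -- m M = π
  have hfleM : ∀ θ ∈ Set.Icc 0 π, f θ ≤ M := by
    intro θ hθ
    rcases eq_or_ne θ θM with rfl | h
    · exact le_rfl
    · exact (hmax θ hθ h).le
  have hmM : m M = π := by
    have : {θ : ℝ | θ ∈ Set.Icc 0 π ∧ f θ ≤ M} = Set.Icc 0 π := by
      ext θ; exact ⟨fun h => h.1, fun h => ⟨h, hfleM θ h⟩⟩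
    simp only [hmdef, this, Real.volume_Icc]
    rw [ENNReal.toReal_ofReal (by linarith)]
    ring
  have hMmem : ∀ x : ℝ, x ≤ 1 → x ≤ (1 / π) * m M := by
    intro x hx
    rw [hmM]; rw [one_div, inv_mul_cancel₀ hπ.ne']; exact hx
  -- continuity at θM
  have hcontM : ContinuousAt f θM :=
    hf.continuousAt (Icc_mem_nhds (by linarith) θMπ)
  -- for t < M, m t < π
  have hmlt : ∀ t, t < M → m t < π := by
    intro t ht
    have hev : ∀ᶠ θ in nhds θM, t < f θ := hcontM.eventually (eventually_gt_nhds ht)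
    rw [Metric.eventually_nhds_iff] at hev
    obtain ⟨ε, hε, hball⟩ := hev
    set r := min (ε / 2) θM with hr
    have hr0 : 0 < r := lt_min (by linarith) θM0
    have hrθ : r ≤ θM := min_le_right _ _
    have : m t ≤ π - (θM - (θM - r)) := by
      apply hA t (θM - r) (by linarith) (by linarith)
      intro θ hθ
      apply hball
      rw [Real.dist_eq, abs_of_nonpos (by linarith [hθ.2] : θ - θM ≤ 0)]
      have : θM - θ < r := by linarith [hθ.1]
      have : r ≤ ε / 2 := min_le_left _ _
      linarith [hθ.1, min_le_left (ε/2) θM]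
    have : m t ≤ π - r := by linarith
    linarith
  -- gt 1 = M
  have hlbM : ∀ t ∈ {t : ℝ | (1:ℝ) ≤ (1 / π) * m t}, M ≤ t := by
    intro t ht
    by_contra hc
    push_neg at hc
    have h1 := hmlt t hc
    have h2 : (1 / π) * m t < 1 := by
      rw [div_mul_eq_mul_div, one_mul, div_lt_one hπ]; exact h1
    exact absurd (ht : (1:ℝ) ≤ (1 / π) * m t) (not_le.2 h2)
  have hgt1 : gt 1 = M := by
    rw [hgt' 1]
    exact le_antisymm (csInf_le ⟨M, hlbM⟩ (hMmem 1 le_rfl))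
      (le_csInf ⟨M, hMmem 1 le_rfl⟩ hlbM)
  -- derivative control near θM
  have key : ∀ η : ℝ, 0 < η → ∃ δ' > 0, δ' ≤ θM ∧
      ∀ θ ∈ Set.Icc (θM - δ') θM, M - η * (θM - θ) ≤ f θ := by
    intro η hη
    set s := Set.Icc (θM - δ) (θM + δ) with hs
    have hconv : θM - δ < θM + δ := by linarith
    have huniq : UniqueDiffOn ℝ s := uniqueDiffOn_Icc hconv
    have hcd : ContinuousOn (derivWithin f s) s := hC1.continuousOn_derivWithin huniq le_rfl
    have hdiff : DifferentiableOn ℝ f s := hC1.differentiableOn one_ne_zero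
    have hdiffAt : ∀ θ ∈ Set.Ioo (θM - δ) (θM + δ), DifferentiableAt ℝ f θ := by
      intro θ hθ
      exact (hdiff θ (Set.Ioo_subset_Icc_self hθ)).differentiableAt
        (Icc_mem_nhds hθ.1 hθ.2)
    have hdw : ∀ θ ∈ Set.Ioo (θM - δ) (θM + δ), derivWithin f s θ = deriv f θ := by
      intro θ hθ
      exact derivWithin_of_mem_nhds (Icc_mem_nhds hθ.1 hθ.2)
    have hθMmem : θM ∈ Set.Ioo (θM - δ) (θM + δ) := ⟨by linarith, by linarith⟩
    have hcont : ContinuousAt (deriv f) θM := by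
      have h1 : ContinuousWithinAt (derivWithin f s) s θM :=
        hcd θM (Set.Ioo_subset_Icc_self hθMmem)
      have h2 : ContinuousWithinAt (derivWithin f s) (Set.Ioo (θM - δ) (θM + δ)) θM :=
        h1.mono Set.Ioo_subset_Icc_self
      have h3 : ContinuousWithinAt (deriv f) (Set.Ioo (θM - δ) (θM + δ)) θM :=
        h2.congr (fun θ hθ => (hdw θ hθ).symm) ((hdw θM hθMmem).symm)
      exact h3.continuousAt (Ioo_mem_nhds hθMmem.1 hθMmem.2)
    have hev : ∀ᶠ θ in nhds θM, |deriv f θ| < η := by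
      have := hcont.tendsto
      rw [hderiv] at this
      have := this.eventually (eventually_abs_sub_lt 0 hη)
      simpa using this
    rw [Metric.eventually_nhds_iff] at hev
    obtain ⟨ε, hε, hball⟩ := hev
    refine ⟨min (min (ε / 2) (δ / 2)) θM, lt_min (lt_min (by linarith) (by linarith)) θM0,
      min_le_right _ _, ?_⟩
    set δ' := min (min (ε / 2) (δ / 2)) θM with hδ'
    have hδ'ε : δ' ≤ ε / 2 := le_trans (min_le_left _ _) (min_le_left _ _)
    have hδ'δ : δ' ≤ δ / 2 := le_trans (min_le_left _ _) (min_le_right _ _)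
    intro θ hθ
    set s' := Set.Icc (θM - δ') θM with hs'
    have hsub' : s' ⊆ Set.Ioo (θM - δ) (θM + δ) := by
      intro y hy
      constructor
      · have := hy.1; linarith
      · have := hy.2; linarith
    have hbound : ∀ y ∈ s', ‖deriv f y‖ ≤ η := by
      intro y hy
      have : dist y θM < ε := by
        rw [Real.dist_eq, abs_of_nonpos (by linarith [hy.2] : y - θM ≤ 0)]
        have := hy.1
        linarith
      exact (hball this).le
    have hd' : ∀ y ∈ s', HasDerivWithinAt f (deriv f y) s' y := by
      intro y hy
      exact (hdiffAt y (hsub' hy)).hasDerivAt.hasDerivWithinAt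
    have hmvt := Convex.norm_image_sub_le_of_norm_hasDerivWithin_le hd' hbound
      (convex_Icc _ _) hθ (Set.right_mem_Icc.2 (by linarith [hθ.1, hθ.2] : θM - δ' ≤ θM))
    rw [Real.norm_eq_abs, Real.norm_eq_abs] at hmvt
    have h1 : |f θM - f θ| ≤ η * |θM - θ| := hmvt
    have h2 : |θM - θ| = θM - θ := abs_of_nonneg (by linarith [hθ.2])
    rw [h2] at h1
    have := abs_le.1 h1
    linarith [this.1, this.2]
  -- main estimate on difference quotients
  have main : ∀ c : ℝ, 0 < c → ∀ᶠ x in nhdsWithin 1 (Set.Iio 1),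
      |slope gt 1 x| ≤ c := by
    intro c hc
    set η := c / (4 * π) with hη
    have hη0 : 0 < η := div_pos hc (by linarith)
    obtain ⟨δ', hδ'0, hδ'θ, hkey⟩ := key η hη0
    set β := δ' / (4 * π) with hβ
    have hβ0 : 0 < β := div_pos hδ'0 (by linarith)
    have hmem : Set.Ioo (1 - β) 1 ∈ nhdsWithin 1 (Set.Iio 1) :=
      Ioo_mem_nhdsLT_of_mem ⟨by linarith, le_rfl⟩
    filter_upwards [hmem] with x hx
    set u := 1 - x with hu
    have hu0 : 0 < u := by simp only [hu]; linarith [hx.2]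
    have huβ : u < β := by simp only [hu]; linarith [hx.1]
    -- the bound on m (M - c*u)
    have hstep : m (M - c * u) ≤ π - 4 * π * u := by
      have h4u : 4 * π * u < δ' := by
        have : u < δ' / (4 * π) := huβ
        calc 4 * π * u < 4 * π * (δ' / (4 * π)) := by
              apply mul_lt_mul_of_pos_left this; positivity
        _ = δ' := by field_simp
      have ha0 : (0:ℝ) ≤ θM - 4 * π * u := by
        have : 4 * π * u < θM := lt_of_lt_of_le h4u hδ'θ
        linarith
      have := hA (M - c * u) (θM - 4 * π * u) ha0 (by nlinarith) ?_
      · linarith [this]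
      · intro θ hθ
        have hθmem : θ ∈ Set.Icc (θM - δ') θM := by
          constructor
          · have := hθ.1; linarith
          · exact hθ.2
        have h1 := hkey θ hθmem
        have h2 : θM - θ < 4 * π * u := by linarith [hθ.1]
        have h3 : η * (θM - θ) < η * (4 * π * u) := by
          apply mul_lt_mul_of_pos_left h2 hη0
        have h4 : η * (4 * π * u) = c * u := by
          rw [hη]; field_simp
        linarith
    -- bounds on gt x
    have hx1 : x ≤ 1 := (hx.2).le
    have hnotmem : ∀ t, t ≤ M - c * u → ¬ (x ≤ (1 / π) * m t) := by
      intro t ht hmem'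
      have h1 : m t ≤ π - 4 * π * u := le_trans (hmono_m ht) hstep
      have h2 : (1 / π) * m t ≤ 1 - 4 * u := by
        rw [div_mul_eq_mul_div, one_mul, div_le_iff₀ hπ]
        nlinarith
      have : x ≤ 1 - 4 * u := le_trans hmem' h2
      simp only [hu] at this
      linarith
    have hlb : ∀ t ∈ {t : ℝ | x ≤ (1 / π) * m t}, M - c * u ≤ t := by
      intro t ht
      by_contra hcon
      push_neg at hcon
      exact hnotmem t hcon.le ht
    have hgtx_le : gt x ≤ M := by
      rw [hgt' x]
      exact csInf_le ⟨M - c * u, hlb⟩ (hMmem x hx1)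
    have hgtx_ge : M - c * u ≤ gt x := by
      rw [hgt' x]
      exact le_csInf ⟨M, hMmem x hx1⟩ hlb
    -- slope bound
    have hs : slope gt 1 x = (gt x - M) / (x - 1) := by
      rw [slope_def_field, hgt1]
    rw [hs, abs_div]
    have h1 : |x - 1| = u := by
      rw [abs_of_neg (by linarith [hx.2] : x - 1 < 0)]
      simp only [hu]; ring
    have h2 : |gt x - M| ≤ c * u := abs_le.2 ⟨by linarith, by linarith⟩
    rw [h1, div_le_iff₀ hu0]
    exact h2
  -- conclude
  rw [hasDerivWithinAt_iff_tendsto_slope]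
  have hdiff : Set.Iic (1:ℝ) \ {1} = Set.Iio 1 := by
    ext y
    simp only [Set.mem_diff, Set.mem_Iic, Set.mem_singleton_iff, Set.mem_Iio]
    constructor
    · rintro ⟨h1, h2⟩; exact lt_of_le_of_ne h1 h2
    · intro h; exact ⟨h.le, ne_of_lt h⟩
  rw [hdiff]
  rw [NormedAddCommGroup.tendsto_nhds_zero]
  intro ε hε
  filter_upwards [main (ε / 2) (half_pos hε)] with x hx
  rw [Real.norm_eq_abs]
  linarith
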